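/- Let n ≥ 3 be an integer. In ℚⁿ with standard basis e₁, …, eₙ, set αᵢ = eᵢ − e_{i+1} for 1 ≤ i ≤ n−1 and αₙ = e_{n−1} + eₙ (the simple roots of type Dₙ), and let Q⁺ be the set of ℕ₀-linear combinations of α₁, …, αₙ. Set ω₁ = e₁, ω_{n−1} = (e₁ + ⋯ + e_{n−1} − eₙ)/2, ωₙ = (e₁ + ⋯ + eₙ)/2, and X⁺(γ) = {m·ω₁ + ω_{n−1} : m ∈ ℕ₀} ∪ {m·ω₁ + ωₙ : m ∈ ℕ₀}. Define t : ℤ → X⁺(γ) by t(−m) = m·ω₁ + ω_{n−1} and t(m+1) = m·ω₁ + ωₙ for m ∈ ℕ₀. Then: (a) t is a bijection; (b) whenever μ, μ' ∈ X⁺(γ) satisfy μ − μ' ∈ Q⁺ \ {0}, the integers i = t⁻¹(μ') and j = t⁻¹(μ) satisfy i ⊏ j, where the strict relation ⊏ on ℤ is defined by: i ⊏ j iff either (|i| < |j| and |j| − |i| is even) or (|i| = |j| and i > 0 > j). -/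
import Mathlib


/-- The standard basis vector `e_j` (1-indexed) of `ℚⁿ`. -/
def stdBasisQ (n j : ℕ) : Fin n → ℚ := fun i => if (i : ℕ) + 1 = j then 1 else 0

/-- The simple roots of type `Dₙ` (1-indexed): `α_j = e_j − e_{j+1}` for `j < n` and
`α_n = e_{n−1} + e_n`. -/
def simpleRootD (n j : ℕ) : Fin n → ℚ :=
  if j < n then stdBasisQ n j - stdBasisQ n (j + 1)
  else stdBasisQ n (n - 1) + stdBasisQ n n

/-- `Q⁺`: the set of `ℕ₀`-linear combinations of the simple roots `α₁, …, αₙ`. -/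
def QposD (n : ℕ) : Set (Fin n → ℚ) :=
  {v | ∃ c : ℕ → ℕ, v = ∑ j ∈ Finset.Icc 1 n, (c j : ℚ) • simpleRootD n j}

/-- `ω₁ = e₁`. -/
def omegaOne (n : ℕ) : Fin n → ℚ := stdBasisQ n 1

/-- `ω_{n−1} = (e₁ + ⋯ + e_{n−1} − eₙ)/2`. -/
def omegaNsub1 (n : ℕ) : Fin n → ℚ :=
  (1 / 2 : ℚ) • ((∑ j ∈ Finset.Icc 1 (n - 1), stdBasisQ n j) - stdBasisQ n n)

/-- `ωₙ = (e₁ + ⋯ + eₙ)/2`. -/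
def omegaNth (n : ℕ) : Fin n → ℚ :=
  (1 / 2 : ℚ) • ∑ j ∈ Finset.Icc 1 n, stdBasisQ n j

/-- The set `X⁺(γ) = {m·ω₁ + ω_{n−1} : m ∈ ℕ₀} ∪ {m·ω₁ + ωₙ : m ∈ ℕ₀}`. -/
def XplusGammaD (n : ℕ) : Set (Fin n → ℚ) :=
  {v | ∃ m : ℕ, v = (m : ℚ) • omegaOne n + omegaNsub1 n} ∪
  {v | ∃ m : ℕ, v = (m : ℚ) • omegaOne n + omegaNth n}

/-- The map `t : ℤ → X⁺(γ)`, `t(−m) = m·ω₁ + ω_{n−1}` and `t(m+1) = m·ω₁ + ωₙ`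
for `m ∈ ℕ₀`. -/
def tMapD (n : ℕ) : ℤ → (Fin n → ℚ) := fun z =>
  if z ≤ 0 then (-z : ℚ) • omegaOne n + omegaNsub1 n
  else ((z : ℚ) - 1) • omegaOne n + omegaNth n

/-- The strict Macdonald order `i ⊏ j` on `ℤ`:
either `|i| < |j|` with `|j| − |i|` even, or `|i| = |j|` with `i > 0 > j`. -/
def macLtZ (i j : ℤ) : Prop :=
  (|i| < |j| ∧ Even (|j| - |i|)) ∨ (|i| = |j| ∧ 0 < i ∧ j < 0)

lemma sum_indicator (n j : ℕ) :
    (∑ k ∈ Finset.range n, if k + 1 = j then (1:ℚ) else 0) = if 1 ≤ j ∧ j ≤ n then 1 else 0 := by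
  induction n with
  | zero => rw [Finset.range_zero, Finset.sum_empty, if_neg (by omega)]
  | succ m ih =>
    rw [Finset.sum_range_succ, ih]
    split_ifs <;> (try norm_num) <;> omega

lemma sum_stdBasisQ (n j : ℕ) :
    (∑ i : Fin n, stdBasisQ n j i) = if 1 ≤ j ∧ j ≤ n then 1 else 0 := by
  simp only [stdBasisQ]
  rw [Fin.sum_univ_eq_sum_range (fun k => if k + 1 = j then (1:ℚ) else 0)]
  exact sum_indicator n j

lemma sum_std_apply (n m : ℕ) (i : Fin n) :
    (∑ j ∈ Finset.Icc 1 m, stdBasisQ n j) i = if (i:ℕ)+1 ≤ m then 1 else 0 := by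
  rw [Finset.sum_apply]
  simp only [stdBasisQ]
  rw [Finset.sum_ite_eq]
  simp [Finset.mem_Icc]

lemma sum_sum_std (n m : ℕ) (hm : m ≤ n) :
    (∑ i : Fin n, (∑ j ∈ Finset.Icc 1 m, stdBasisQ n j) i) = m := by
  simp only [Finset.sum_apply]
  rw [Finset.sum_comm]
  have h : ∀ j ∈ Finset.Icc 1 m, (∑ i : Fin n, stdBasisQ n j i) = (1:ℚ) := by
    intro j hj
    simp only [Finset.mem_Icc] at hj
    rw [sum_stdBasisQ, if_pos ⟨hj.1, le_trans hj.2 hm⟩]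
  rw [Finset.sum_congr rfl h, Finset.sum_const, Nat.card_Icc]
  simp

lemma sum_simpleRootD (n : ℕ) (hn : 3 ≤ n) (k : ℕ) (hk : k ∈ Finset.Icc 1 n) :
    (∑ i : Fin n, simpleRootD n k i) = if k = n then 2 else 0 := by
  simp only [Finset.mem_Icc] at hk
  unfold simpleRootD
  by_cases h : k < n
  · rw [if_pos h]
    simp only [Pi.sub_apply, Finset.sum_sub_distrib, sum_stdBasisQ]
    rw [if_pos (by omega : 1 ≤ k ∧ k ≤ n), if_pos (by omega : 1 ≤ k+1 ∧ k+1 ≤ n),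
      if_neg (by omega)]
    norm_num
  · rw [if_neg h, if_pos (by omega)]
    simp only [Pi.add_apply, Finset.sum_add_distrib, sum_stdBasisQ]
    rw [if_pos (by omega : 1 ≤ n-1 ∧ n-1 ≤ n), if_pos (by omega : 1 ≤ n ∧ n ≤ n)]
    norm_num

lemma last_simpleRootD (n : ℕ) (hn : 3 ≤ n) (k : ℕ) (hk : k ∈ Finset.Icc 1 n) :
    simpleRootD n k ⟨n-1, by omega⟩
      = (if k = n then 1 else 0) - (if k = n-1 then 1 else 0) := by
  simp only [Finset.mem_Icc] at hk
  unfold simpleRootD stdBasisQ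
  have hlast : (n - 1) + 1 = n := by omega
  by_cases h : k < n
  · rw [if_pos h]
    simp only [Pi.sub_apply, hlast]
    split_ifs <;> (try norm_num) <;> omega
  · rw [if_neg h]
    simp only [Pi.add_apply, hlast]
    split_ifs <;> (try norm_num) <;> omega

lemma tMapD_first (n : ℕ) (hn : 3 ≤ n) (z : ℤ) :
    tMapD n z ⟨0, by omega⟩ = (if z ≤ 0 then (-z:ℚ) else (z:ℚ) - 1) + 1/2 := by
  unfold tMapD omegaOne omegaNsub1 omegaNth
  by_cases hz : z ≤ 0
  · rw [if_pos hz, if_pos hz]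
    simp only [Pi.add_apply, Pi.smul_apply, Pi.sub_apply, smul_eq_mul, sum_std_apply, stdBasisQ,
      if_true]
    rw [if_pos (show (0:ℕ)+1 ≤ n-1 by omega), if_neg (show ¬((0:ℕ)+1 = n) by omega)]
    ring
  · rw [if_neg hz, if_neg hz]
    simp only [Pi.add_apply, Pi.smul_apply, smul_eq_mul, sum_std_apply, stdBasisQ, if_true]
    rw [if_pos (show (0:ℕ)+1 ≤ n by omega)]
    ring

lemma tMapD_last (n : ℕ) (hn : 3 ≤ n) (z : ℤ) :
    tMapD n z ⟨n-1, by omega⟩ = if z ≤ 0 then (-(1/2):ℚ) else 1/2 := by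
  unfold tMapD omegaOne omegaNsub1 omegaNth
  have hlast : (n - 1) + 1 = n := by omega
  by_cases hz : z ≤ 0
  · rw [if_pos hz, if_pos hz]
    simp only [Pi.add_apply, Pi.smul_apply, Pi.sub_apply, smul_eq_mul, sum_std_apply, stdBasisQ,
      hlast]
    norm_num [show ¬(n = 1) by omega, show ¬(n ≤ n-1) by omega]
  · rw [if_neg hz, if_neg hz]
    simp only [Pi.add_apply, Pi.smul_apply, smul_eq_mul, sum_std_apply, stdBasisQ, hlast]
    norm_num [show ¬(n = 1) by omega]

lemma tMapD_sum (n : ℕ) (hn : 3 ≤ n) (z : ℤ) :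
    (∑ i : Fin n, tMapD n z i) = (if z ≤ 0 then (-z:ℚ) else (z:ℚ)) + ((n:ℚ)-2)/2 := by
  unfold tMapD omegaOne omegaNsub1 omegaNth
  have hcast : ((n - 1 : ℕ) : ℚ) = (n : ℚ) - 1 := by
    push_cast [Nat.cast_sub (by omega : 1 ≤ n)]; ring
  by_cases hz : z ≤ 0
  · rw [if_pos hz, if_pos hz]
    simp only [Pi.add_apply, Pi.smul_apply, Pi.sub_apply, smul_eq_mul]
    rw [Finset.sum_add_distrib, ← Finset.mul_sum, ← Finset.mul_sum, Finset.sum_sub_distrib,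
      sum_sum_std n (n-1) (by omega), sum_stdBasisQ, sum_stdBasisQ,
      if_pos (by omega : 1 ≤ 1 ∧ 1 ≤ n), if_pos (by omega : 1 ≤ n ∧ n ≤ n), hcast]
    ring
  · rw [if_neg hz, if_neg hz]
    simp only [Pi.add_apply, Pi.smul_apply, smul_eq_mul]
    rw [Finset.sum_add_distrib, ← Finset.mul_sum, ← Finset.mul_sum,
      sum_sum_std n n (le_refl n), sum_stdBasisQ, if_pos (by omega : 1 ≤ 1 ∧ 1 ≤ n)]
    ring

/-- For `n ≥ 3`: (a) `t` is a bijection from `ℤ` onto `X⁺(γ)`;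
(b) if `μ − μ' ∈ Q⁺ \ {0}` with `μ = t(j)`, `μ' = t(i)`, then `i ⊏ j` in the
Macdonald order on `ℤ`. -/
theorem DII_tmap_bijective_and_monotone (n : ℕ) (hn : 3 ≤ n) :
    Function.Injective (tMapD n) ∧
    Set.range (tMapD n) = XplusGammaD n ∧
    (∀ i j : ℤ, tMapD n j - tMapD n i ∈ QposD n \ {0} → macLtZ i j) := by
  refine ⟨?_, ?_, ?_⟩
  · -- injectivity
    intro a b hab
    have hf : tMapD n a ⟨0, by omega⟩ = tMapD n b ⟨0, by omega⟩ := congrFun hab _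
    have hl : tMapD n a ⟨n-1, by omega⟩ = tMapD n b ⟨n-1, by omega⟩ := congrFun hab _
    rw [tMapD_first n hn, tMapD_first n hn] at hf
    rw [tMapD_last n hn, tMapD_last n hn] at hl
    by_cases ha : a ≤ 0 <;> by_cases hb : b ≤ 0
    · rw [if_pos ha, if_pos hb] at hf
      have : (a:ℚ) = (b:ℚ) := by linarith
      exact_mod_cast this
    · rw [if_pos ha, if_neg hb] at hl; norm_num at hl
    · rw [if_neg ha, if_pos hb] at hl; norm_num at hl
    · rw [if_neg ha, if_neg hb] at hf
      have : (a:ℚ) = (b:ℚ) := by linarith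
      exact_mod_cast this
  · -- range
    ext v
    constructor
    · rintro ⟨z, rfl⟩
      unfold tMapD
      by_cases hz : z ≤ 0
      · left
        refine ⟨(-z).toNat, ?_⟩
        rw [if_pos hz]
        congr 1
        congr 1
        exact_mod_cast (Int.toNat_of_nonneg (show (0:ℤ) ≤ -z by omega)).symm
      · right
        refine ⟨(z-1).toNat, ?_⟩
        rw [if_neg hz]
        congr 1
        congr 1
        exact_mod_cast (Int.toNat_of_nonneg (show (0:ℤ) ≤ z - 1 by omega)).symm
    · rintro (⟨m, rfl⟩ | ⟨m, rfl⟩)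
      · refine ⟨-(m:ℤ), ?_⟩
        unfold tMapD
        rw [if_pos (show -(m:ℤ) ≤ 0 by omega)]
        congr 1
        congr 1
        push_cast
        ring
      · refine ⟨(m:ℤ)+1, ?_⟩
        unfold tMapD
        rw [if_neg (show ¬((m:ℤ)+1 ≤ 0) by omega)]
        congr 1
        congr 1
        push_cast
        ring
  · -- monotone
    intro i j hmem
    obtain ⟨⟨c, hc⟩, hne⟩ := hmem
    have hne0 : tMapD n j - tMapD n i ≠ 0 := fun h => hne (by simp [h])
    -- apply the total-sum functional
    have hA : ((if j ≤ 0 then (-j:ℚ) else (j:ℚ)) - (if i ≤ 0 then (-i:ℚ) else (i:ℚ)))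
        = 2 * (c n : ℚ) := by
      have h1 : (∑ i' : Fin n, (tMapD n j - tMapD n i) i') = 2 * (c n : ℚ) := by
        rw [hc]
        simp only [Finset.sum_apply, Pi.smul_apply, smul_eq_mul]
        rw [Finset.sum_comm]
        have h : ∀ k ∈ Finset.Icc 1 n,
            (∑ i' : Fin n, (c k:ℚ) * simpleRootD n k i') = if k = n then 2*(c k:ℚ) else 0 := by
          intro k hk
          rw [← Finset.mul_sum, sum_simpleRootD n hn k hk]
          split_ifs <;> ring
        rw [Finset.sum_congr rfl h,
          Finset.sum_ite_eq' (Finset.Icc 1 n) n (fun k => 2*(c k:ℚ)),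
          if_pos (show n ∈ Finset.Icc 1 n from Finset.mem_Icc.mpr (by omega))]
      simp only [Pi.sub_apply] at h1
      rw [Finset.sum_sub_distrib, tMapD_sum n hn, tMapD_sum n hn] at h1
      linarith
    -- apply the last-coordinate functional
    have hB : ((if j ≤ 0 then (-(1/2):ℚ) else 1/2) - (if i ≤ 0 then (-(1/2):ℚ) else 1/2))
        = (c n : ℚ) - (c (n-1) : ℚ) := by
      have h1 := congrFun hc (⟨n-1, by omega⟩ : Fin n)
      simp only [Pi.sub_apply, Finset.sum_apply, Pi.smul_apply, smul_eq_mul] at h1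
      rw [tMapD_last n hn, tMapD_last n hn] at h1
      have h : ∀ k ∈ Finset.Icc 1 n,
          (c k:ℚ) * simpleRootD n k ⟨n-1, by omega⟩
            = (if k = n then (c k:ℚ) else 0) - (if k = n-1 then (c k:ℚ) else 0) := by
        intro k hk
        rw [last_simpleRootD n hn k hk]
        split_ifs <;> ring
      rw [Finset.sum_congr rfl h, Finset.sum_sub_distrib,
        Finset.sum_ite_eq' (Finset.Icc 1 n) n (fun k => (c k:ℚ)),
        Finset.sum_ite_eq' (Finset.Icc 1 n) (n-1) (fun k => (c k:ℚ)),
        if_pos (show n ∈ Finset.Icc 1 n from Finset.mem_Icc.mpr (by omega)),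
        if_pos (show n-1 ∈ Finset.Icc 1 n from Finset.mem_Icc.mpr (by omega))] at h1
      exact h1
    -- convert hA to an integer statement
    have habsj : ((|j| : ℤ) : ℚ) = if j ≤ 0 then (-j:ℚ) else (j:ℚ) := by
      by_cases h : j ≤ 0
      · rw [if_pos h, abs_of_nonpos h]; push_cast; ring
      · rw [if_neg h, abs_of_pos (by omega)]
    have habsi : ((|i| : ℤ) : ℚ) = if i ≤ 0 then (-i:ℚ) else (i:ℚ) := by
      by_cases h : i ≤ 0
      · rw [if_pos h, abs_of_nonpos h]; push_cast; ring
      · rw [if_neg h, abs_of_pos (by omega)]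
    have hAZ : |j| - |i| = 2 * (c n : ℤ) := by
      have : ((|j| - |i| : ℤ) : ℚ) = ((2 * (c n : ℤ) : ℤ) : ℚ) := by
        push_cast [habsj, habsi]
        push_cast at hA ⊢
        linarith [hA]
      exact_mod_cast this
    have hij : i ≠ j := by
      intro h; exact hne0 (by rw [h, sub_self])
    have hcnn : (0:ℤ) ≤ (c n : ℤ) := Int.natCast_nonneg _
    rcases lt_or_eq_of_le (show |i| ≤ |j| by linarith) with hlt | heq
    · exact Or.inl ⟨hlt, ⟨(c n : ℤ), by linarith⟩⟩
    · -- |i| = |j|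
      have h0 : (2:ℤ) * (c n : ℤ) = 0 := by rw [← hAZ, heq, sub_self]
      have hcn : c n = 0 := by omega
      rcases abs_eq_abs.mp heq with h1 | h2
      · exact absurd h1 hij
      · -- i = -j
        have hcnneg : (0:ℚ) ≤ (c (n-1) : ℚ) := Nat.cast_nonneg _
        rw [hcn] at hB
        push_cast at hB
        by_cases hj : j ≤ 0
        · have hj0 : j ≠ 0 := by
            intro h; apply hij; omega
          refine Or.inr ⟨heq, by omega, by omega⟩
        · -- j > 0, so i = -j < 0 ≤ 0
          exfalso
          rw [if_neg hj, if_pos (by omega : i ≤ 0)] at hB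
          linarith
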